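/- arXiv:1505.04214 — 4 statements merged into one kernel-verified Lean document; each statement's English description precedes it below -/
import Mathlib

section
/- Let f be differentiable and k-uniformly convex with modulus λ along coordinate j, and let x*_j = x + α*_j e_j be the minimizer of α ↦ f(x + α e_j). Then |[∇f(x)]_j| ≥ (λ/2)‖x - x*_j‖^(k-1). -/
open Real

/-- if f is k-uniformly convex with modulus λ along coordinate j and
    x*_j = x + α*_j • e_j minimizes α ↦ f(x + α e_j), then
    |[∇f(x)]_j| ≥ (λ/2)‖x - x*_j‖^(k-1). -/
theorem coordinate_gradient_lower_bound
    {d : ℕ} (f : EuclideanSpace ℝ (Fin d) → ℝ)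
    (G : EuclideanSpace ℝ (Fin d) → EuclideanSpace ℝ (Fin d))
    (hdiff : ∀ x, HasGradientAt f (G x) x)
    (lam k : ℝ) (hlam : 0 < lam) (hk : 2 ≤ k)
    (x : EuclideanSpace ℝ (Fin d)) (j : Fin d) (αstar : ℝ)
    (hUCj : ∀ α β : ℝ,
      f (x + β • EuclideanSpace.single j (1 : ℝ))
        ≥ f (x + α • EuclideanSpace.single j (1 : ℝ))
          + G (x + α • EuclideanSpace.single j (1 : ℝ)) j * (β - α)
          + (lam / 2) * |β - α| ^ k)
    (hmin : ∀ α : ℝ, f (x + αstar • EuclideanSpace.single j (1 : ℝ))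
      ≤ f (x + α • EuclideanSpace.single j (1 : ℝ)))
    (hfoc : G (x + αstar • EuclideanSpace.single j (1 : ℝ)) j = 0) :
    |G x j| ≥ (lam / 2) * ‖x - (x + αstar • EuclideanSpace.single j (1 : ℝ))‖ ^ (k - 1) := by
  have hnorm : ‖x - (x + αstar • EuclideanSpace.single j (1 : ℝ))‖ = |αstar| := by
    rw [show x - (x + αstar • EuclideanSpace.single j (1 : ℝ))
        = -(αstar • EuclideanSpace.single j (1 : ℝ)) by abel]
    rw [norm_neg, norm_smul, EuclideanSpace.norm_single]
    simp [Real.norm_eq_abs]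
  rw [hnorm]
  rcases eq_or_ne αstar 0 with h0 | h0
  · rw [h0, abs_zero, Real.zero_rpow (by linarith), mul_zero]
    exact abs_nonneg _
  · have habs : 0 < |αstar| := abs_pos.mpr h0
    have h1 := hUCj 0 αstar
    have h2 := hUCj αstar 0
    simp only [zero_smul, add_zero, sub_zero, zero_sub, abs_neg, hfoc, zero_mul] at h1 h2
    have key : lam * |αstar| ^ k ≤ -(G x j * αstar) := by linarith
    have hle : -(G x j * αstar) ≤ |G x j| * |αstar| := by
      calc -(G x j * αstar) ≤ |G x j * αstar| := neg_le_abs _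
        _ = |G x j| * |αstar| := abs_mul _ _
    have hrw : |αstar| ^ k = |αstar| ^ (k - 1) * |αstar| := by
      rw [show k = (k - 1) + 1 by ring, Real.rpow_add habs, Real.rpow_one]
      ring_nf
    have : lam * (|αstar| ^ (k - 1)) * |αstar| ≤ |G x j| * |αstar| := by
      rw [mul_assoc, ← hrw]; linarith
    have h3 : lam * |αstar| ^ (k - 1) ≤ |G x j| :=
      le_of_mul_le_mul_right this habs
    have hpow : 0 ≤ |αstar| ^ (k - 1) := Real.rpow_nonneg (abs_nonneg _) _
    nlinarith
end

section
/- Suppose the regression function η : [0,R] → [0,1] satisfies the lower Tsybakov noise condition μ|x-t|^(k-1) ≤ |η(x) - 1/2| for all x in an interval containing both t and a point x̂. If the excess risk satisfies ∫ from min(x̂,t) to max(x̂,t) of |2η(x)-1| dx ≤ ε, then |x̂ - t| ≤ (kε/(2μ))^(1/k). -/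
open Real

/-- under the lower Tsybakov noise condition, an excess-risk bound of ε
    implies the point-error bound |x̂ - t| ≤ (kε/(2μ))^(1/k). -/
theorem point_error_of_excess_risk
    (R : ℝ) (hR : 0 < R) (η : ℝ → ℝ) (t xhat : ℝ)
    (ht : t ∈ Set.Icc (0 : ℝ) R) (hxhat : xhat ∈ Set.Icc (0 : ℝ) R)
    (hη : ∀ x, η x ∈ Set.Icc (0 : ℝ) 1)
    (μ k ε : ℝ) (hμ : 0 < μ) (hk : 1 ≤ k) (hε : 0 ≤ ε)
    (hTNC : ∀ x ∈ Set.uIcc xhat t, μ * |x - t| ^ (k - 1) ≤ |η x - 1/2|)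
    (hint : IntervalIntegrable (fun x => |2 * η x - 1|) MeasureTheory.volume
      (min xhat t) (max xhat t))
    (hrisk : ∫ x in (min xhat t)..(max xhat t), |2 * η x - 1| ≤ ε) :
    |xhat - t| ≤ (k * ε / (2 * μ)) ^ (1 / k) := by
  have hk0 : 0 < k := lt_of_lt_of_le one_pos hk
  have hk1 : (0:ℝ) ≤ k - 1 := by linarith
  set d := |xhat - t| with hdd
  have hd0 : 0 ≤ d := abs_nonneg _
  have hcont : Continuous fun x : ℝ => 2 * μ * |x - t| ^ (k - 1) :=
    continuous_const.mul (((continuous_abs.comp (continuous_id.sub continuous_const)).rpow_const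
      (fun x => Or.inr hk1)))
  have hint2 : IntervalIntegrable (fun x : ℝ => 2 * μ * |x - t| ^ (k - 1))
      MeasureTheory.volume (min xhat t) (max xhat t) :=
    hcont.intervalIntegrable _ _
  -- pointwise bound
  have hpt : ∀ x ∈ Set.Icc (min xhat t) (max xhat t),
      2 * μ * |x - t| ^ (k - 1) ≤ |2 * η x - 1| := by
    intro x hx
    have hx' : x ∈ Set.uIcc xhat t := hx
    have h1 := hTNC x hx'
    have h2 : |2 * η x - 1| = 2 * |η x - 1/2| := by
      rw [show 2 * η x - 1 = 2 * (η x - 1/2) by ring, abs_mul, abs_two]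
    linarith
  have hmono := intervalIntegral.integral_mono_on (min_le_max) hint2 hint hpt
  -- compute the integral of the lower bound
  have hzero : (0:ℝ) ^ (k - 1 + 1) = 0 := by
    rw [show k - 1 + 1 = k by ring]; exact Real.zero_rpow (ne_of_gt hk0)
  have hkey : ∫ x in (min xhat t)..(max xhat t), |x - t| ^ (k - 1) = d ^ k / k := by
    rcases le_total xhat t with h | h
    · rw [min_eq_left h, max_eq_right h]
      have : ∫ x in xhat..t, |x - t| ^ (k - 1) = ∫ x in xhat..t, (t - x) ^ (k - 1) := by
        apply intervalIntegral.integral_congr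
        intro x hx
        rw [Set.uIcc_of_le h] at hx
        show |x - t| ^ (k - 1) = (t - x) ^ (k - 1)
        rw [abs_sub_comm, abs_of_nonneg (by linarith [hx.2] : (0:ℝ) ≤ t - x)]
      rw [this, intervalIntegral.integral_comp_sub_left (fun u => u ^ (k - 1)) t, sub_self,
        integral_rpow (Or.inl (by linarith)), hzero, show k - 1 + 1 = k by ring,
        hdd, abs_sub_comm, abs_of_nonneg (by linarith : (0:ℝ) ≤ t - xhat)]
      ring
    · rw [min_eq_right h, max_eq_left h]
      have : ∫ x in t..xhat, |x - t| ^ (k - 1) = ∫ x in t..xhat, (x - t) ^ (k - 1) := by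
        apply intervalIntegral.integral_congr
        intro x hx
        rw [Set.uIcc_of_le h] at hx
        show |x - t| ^ (k - 1) = (x - t) ^ (k - 1)
        rw [abs_of_nonneg (by linarith [hx.1] : (0:ℝ) ≤ x - t)]
      rw [this, intervalIntegral.integral_comp_sub_right (fun u => u ^ (k - 1)) t, sub_self,
        integral_rpow (Or.inl (by linarith)), hzero, show k - 1 + 1 = k by ring,
        hdd, abs_of_nonneg (by linarith : (0:ℝ) ≤ xhat - t)]
      ring
  have hlow : ∫ x in (min xhat t)..(max xhat t), 2 * μ * |x - t| ^ (k - 1)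
      = 2 * μ * (d ^ k / k) := by
    rw [intervalIntegral.integral_const_mul, hkey]
  have hdk : d ^ k ≤ k * ε / (2 * μ) := by
    have h1 : 2 * μ * (d ^ k / k) ≤ ε := by
      calc 2 * μ * (d ^ k / k) = _ := hlow.symm
        _ ≤ _ := hmono
        _ ≤ ε := hrisk
    rw [le_div_iff₀ (by positivity)]
    calc d ^ k * (2 * μ) = (2 * μ * (d ^ k / k)) * k := by field_simp
      _ ≤ ε * k := by apply mul_le_mul_of_nonneg_right h1 (le_of_lt hk0)
      _ = k * ε := mul_comm _ _
  have hfin : d = (d ^ k) ^ (1 / k) := by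
    rw [← Real.rpow_mul hd0, mul_one_div_cancel (ne_of_gt hk0), Real.rpow_one]
  rw [hfin]
  exact Real.rpow_le_rpow (Real.rpow_nonneg hd0 k) hdk (by positivity)
end

section
/- Let k ≥ 1. Then k^(1/k) ≤ 2; consequently, if the excess risk bound ∫_{x̂∧t}^{x̂∨t} |2η(x)-1| dx ≤ C·R/√T holds together with the lower TNC 2μ|x-t|^(k-1) ≤ |2η(x)-1|, then |x̂-t| ≤ 2(CR/(μ√T))^(1/k). -/
open Real

lemma integral_abs_rpow_aux (k t a b : ℝ) (hk : 0 < k) (hab : a ≤ b)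
    (ht : t = a ∨ t = b) :
    ∫ x in a..b, |x - t| ^ (k - 1) = (b - a) ^ k / k := by
  have hr : (-1 : ℝ) < k - 1 := by linarith
  have hz : (0:ℝ) ^ k = 0 := Real.zero_rpow hk.ne'
  rcases ht with rfl | rfl
  · have hcong : Set.EqOn (fun x => |x - t| ^ (k - 1)) (fun x => (x - t) ^ (k - 1))
        (Set.uIcc t b) := by
      intro x hx
      rw [Set.uIcc_of_le hab] at hx
      simp only
      rw [abs_of_nonneg (by linarith [hx.1])]
    rw [intervalIntegral.integral_congr hcong,
      intervalIntegral.integral_comp_sub_right (fun u => u ^ (k - 1)) t, sub_self,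
      integral_rpow (Or.inl hr)]
    rw [sub_add_cancel, hz, sub_zero]
  · have hcong : Set.EqOn (fun x => |x - t| ^ (k - 1)) (fun x => (t - x) ^ (k - 1))
        (Set.uIcc a t) := by
      intro x hx
      rw [Set.uIcc_of_le hab] at hx
      simp only
      rw [abs_sub_comm, abs_of_nonneg (by linarith [hx.2])]
    rw [intervalIntegral.integral_congr hcong,
      intervalIntegral.integral_comp_sub_left (fun u => u ^ (k - 1)) t, sub_self,
      integral_rpow (Or.inl hr)]
    rw [sub_add_cancel, hz, sub_zero]

/-- k^(1/k) ≤ 2 for k ≥ 1, and consequently an excess-risk bound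
    C·R/√T together with the lower TNC 2μ|x-t|^(k-1) ≤ |2η(x)-1| gives the point-error
    bound |x̂ - t| ≤ 2(CR/(μ√T))^(1/k). -/
theorem point_error_via_kth_root_bound
    (k μ C R T ε : ℝ) (hk : 1 ≤ k) (hμ : 0 < μ) (hC : 0 < C) (hR : 0 < R)
    (hT : 1 ≤ T) (hε : 0 ≤ ε)
    (htriv : (k * ε / (2 * μ)) ^ (1 / k) ≤ (ε / μ * k / 2) ^ (1 / k))
    (η : ℝ → ℝ) (hη : ∀ x, η x ∈ Set.Icc (0 : ℝ) 1) (t xhat : ℝ)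
    (hTNC : ∀ x ∈ Set.uIcc xhat t, 2 * μ * |x - t| ^ (k - 1) ≤ |2 * η x - 1|)
    (hint : IntervalIntegrable (fun x => |2 * η x - 1|) MeasureTheory.volume
      (min xhat t) (max xhat t))
    (hrisk : ∫ x in (min xhat t)..(max xhat t), |2 * η x - 1| ≤ C * R / Real.sqrt T) :
    k ^ (1 / k) ≤ 2 ∧ |xhat - t| ≤ 2 * (C * R / (μ * Real.sqrt T)) ^ (1 / k) := by
  have hk0 : (0:ℝ) < k := lt_of_lt_of_le one_pos hk
  have hkroot : k ^ (1 / k) ≤ 2 := by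
    have h1 : k ≤ (2:ℝ) ^ k := by
      have := one_add_mul_self_le_rpow_one_add (by norm_num : (-1:ℝ) ≤ 1) hk
      norm_num at this
      linarith
    calc k ^ (1/k) ≤ ((2:ℝ) ^ k) ^ (1/k) :=
          Real.rpow_le_rpow hk0.le h1 (by positivity)
      _ = 2 := by
          rw [← Real.rpow_mul (by norm_num), mul_one_div_cancel hk0.ne', Real.rpow_one]
  refine ⟨hkroot, ?_⟩
  have hsT : 0 < Real.sqrt T := Real.sqrt_pos.mpr (by linarith)
  set d := |xhat - t| with hdd
  have hd0 : 0 ≤ d := abs_nonneg _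
  have hcont : Continuous fun x : ℝ => 2 * μ * |x - t| ^ (k - 1) :=
    continuous_const.mul ((continuous_abs.comp (continuous_id.sub continuous_const)).rpow_const
      (fun x => Or.inr (by linarith)))
  have hminmax : min xhat t ≤ max xhat t := min_le_max
  have hmono : (∫ x in (min xhat t)..(max xhat t), 2 * μ * |x - t| ^ (k - 1))
      ≤ ∫ x in (min xhat t)..(max xhat t), |2 * η x - 1| := by
    refine intervalIntegral.integral_mono_on hminmax
      (hcont.intervalIntegrable _ _) hint (fun x hx => hTNC x ?_)
    rw [Set.uIcc]
    exact hx
  have hval : (∫ x in (min xhat t)..(max xhat t), 2 * μ * |x - t| ^ (k - 1))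
      = 2 * μ * (d ^ k / k) := by
    rw [intervalIntegral.integral_const_mul,
      integral_abs_rpow_aux k t (min xhat t) (max xhat t) hk0 hminmax ?_, max_sub_min_eq_abs,
      abs_sub_comm]
    rcases le_total xhat t with h | h
    · exact Or.inr (max_eq_right h).symm
    · exact Or.inl (min_eq_right h).symm
  have hlow : 2 * μ * (d ^ k / k) ≤ C * R / Real.sqrt T := by
    rw [← hval]; exact le_trans hmono hrisk
  have hdknn : 0 ≤ d ^ k := Real.rpow_nonneg hd0 k
  have key : d ^ k * (μ * Real.sqrt T) ≤ k * (C * R) := by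
    have h2 := (div_le_div_iff₀ hk0 hsT).mp
      (show (2 * μ * d ^ k) / k ≤ (C * R) / Real.sqrt T by
        rw [mul_div_assoc]; exact hlow)
    nlinarith [mul_nonneg (mul_nonneg hdknn hμ.le) hsT.le]
  have h3 : d ^ k ≤ k * (C * R / (μ * Real.sqrt T)) := by
    rw [← mul_div_assoc]
    exact (le_div_iff₀ (by positivity)).mpr key
  have e1 : d = (d ^ k) ^ (1 / k) := by
    rw [← Real.rpow_mul hd0, mul_one_div_cancel hk0.ne', Real.rpow_one]
  rw [e1]
  calc (d ^ k) ^ (1/k) ≤ (k * (C * R / (μ * Real.sqrt T))) ^ (1/k) :=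
        Real.rpow_le_rpow hdknn h3 (by positivity)
    _ = k ^ (1/k) * (C * R / (μ * Real.sqrt T)) ^ (1/k) :=
        Real.mul_rpow hk0.le (by positivity)
    _ ≤ 2 * (C * R / (μ * Real.sqrt T)) ^ (1/k) :=
        mul_le_mul_of_nonneg_right hkroot (by positivity)
end

section
/- Let f be convex and k-uniformly convex with modulus λ on S with minimizer x*. Then for any x ∈ S, defining Δ = f(x) - f(x*) ≥ 0 and k* = k/(k-1), we have ‖∇f(x)‖^{k*} ≥ (λ/2)^{1/(k-1)} Δ. -/
open Real
open RealInnerProductSpace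

/-!
Testing the uniform-convexity inequality at `x` against the minimizer `x*` and bounding the inner
product by Cauchy–Schwarz gives `Δ + (λ/2) r^k ≤ G r` with `G = ‖∇f(x)‖`, `r = ‖x - x*‖`.
Hence `Δ ≤ G r` and `(λ/2) r^(k-1) ≤ G`, so `(λ/2) Δ^(k-1) ≤ G^(k-1) (λ/2) r^(k-1) ≤ G^k`;
taking `(k-1)`-th roots gives the claim.
-/

theorem mul_rpow_sub_one_le_rpow_of_add_mul_rpow_le_mul {Δ G r c k : ℝ} (hΔ : 0 ≤ Δ)
    (hG : 0 ≤ G) (hr : 0 ≤ r) (hc : 0 ≤ c) (hk : 1 < k) (h : Δ + c * r ^ k ≤ G * r) :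
    c * Δ ^ (k - 1) ≤ G ^ k := by
  rcases hΔ.eq_or_lt with rfl | hΔpos
  · rw [zero_rpow (by linarith), mul_zero]
    exact rpow_nonneg hG k
  have hΔGr : Δ ≤ G * r := by linarith [mul_nonneg hc (rpow_nonneg hr k)]
  have hGr : 0 < G * r := hΔpos.trans_le hΔGr
  have hr0 : 0 < r := pos_of_mul_pos_right hGr hG
  have hG0 : 0 < G := pos_of_mul_pos_left hGr hr
  have hcr : c * r ^ (k - 1) ≤ G := by
    refine le_of_mul_le_mul_right ?_ hr0
    rw [mul_assoc, ← rpow_add_one hr0.ne', sub_add_cancel]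
    linarith
  calc c * Δ ^ (k - 1) ≤ c * (G * r) ^ (k - 1) := by gcongr
    _ = G ^ (k - 1) * (c * r ^ (k - 1)) := by rw [mul_rpow hG hr]; ring
    _ ≤ G ^ (k - 1) * G := by gcongr
    _ = G ^ k := by rw [← rpow_add_one hG0.ne', sub_add_cancel]

theorem rpow_one_div_mul_le_rpow_div_of_mul_rpow_le {Δ G c p q : ℝ} (hΔ : 0 ≤ Δ) (hG : 0 ≤ G)
    (hc : 0 ≤ c) (hp : 0 < p) (h : c * Δ ^ p ≤ G ^ q) :
    c ^ (1 / p) * Δ ≤ G ^ (q / p) :=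
  calc c ^ (1 / p) * Δ = (c * Δ ^ p) ^ (1 / p) := by
        rw [mul_rpow hc (rpow_nonneg hΔ p), ← rpow_mul hΔ, mul_one_div_cancel hp.ne', rpow_one]
    _ ≤ (G ^ q) ^ (1 / p) := by gcongr
    _ = G ^ (q / p) := by rw [← rpow_mul hG, mul_one_div]

theorem gradient_dominates_suboptimality_general
    {d : ℕ} (S : Set (EuclideanSpace ℝ (Fin d)))
    (f : EuclideanSpace ℝ (Fin d) → ℝ) (g : EuclideanSpace ℝ (Fin d) → EuclideanSpace ℝ (Fin d))
    (lam k : ℝ) (hlam : 0 < lam) (hk : 2 ≤ k)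
    (hUC : ∀ x ∈ S, ∀ y ∈ S,
      f y ≥ f x + ⟪g x, y - x⟫ + (lam / 2) * ‖x - y‖ ^ k)
    (xstar : EuclideanSpace ℝ (Fin d)) (hxstar : xstar ∈ S)
    (hmin : ∀ y ∈ S, f xstar ≤ f y) :
    ∀ x ∈ S, ‖g x‖ ^ (k / (k - 1)) ≥ (lam / 2) ^ (1 / (k - 1)) * (f x - f xstar) := by
  intro x hx
  have hΔ : 0 ≤ f x - f xstar := sub_nonneg.2 (hmin x hx)
  have hgap : (f x - f xstar) + lam / 2 * ‖x - xstar‖ ^ k ≤ ‖g x‖ * ‖x - xstar‖ := by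
    have hUCx := hUC x hx xstar hxstar
    rw [← neg_sub x xstar, inner_neg_right] at hUCx
    linarith [real_inner_le_norm (g x) (x - xstar)]
  refine rpow_one_div_mul_le_rpow_div_of_mul_rpow_le hΔ (norm_nonneg _) (by positivity)
    (by linarith) ?_
  exact mul_rpow_sub_one_le_rpow_of_add_mul_rpow_le_mul hΔ (norm_nonneg _) (norm_nonneg _)
    (by positivity) (by linarith) hgap

/-- for a k-uniformly convex f with minimizer x*, and k* = k/(k-1),
    ‖∇f(x)‖^{k*} ≥ (λ/2)^{1/(k-1)} (f(x) - f(x*)) for every x ∈ S. -/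
theorem gradient_dominates_suboptimality
    {d : ℕ} (S : Set (EuclideanSpace ℝ (Fin d))) (hS : Convex ℝ S)
    (f : EuclideanSpace ℝ (Fin d) → ℝ) (g : EuclideanSpace ℝ (Fin d) → EuclideanSpace ℝ (Fin d))
    (hdiff : ∀ x ∈ S, HasGradientAt f (g x) x)
    (lam k : ℝ) (hlam : 0 < lam) (hk : 2 ≤ k)
    (hUC : ∀ x ∈ S, ∀ y ∈ S,
      f y ≥ f x + ⟪g x, y - x⟫ + (lam / 2) * ‖x - y‖ ^ k)
    (xstar : EuclideanSpace ℝ (Fin d)) (hxstar : xstar ∈ S)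
    (hmin : ∀ y ∈ S, f xstar ≤ f y) :
    ∀ x ∈ S, ‖g x‖ ^ (k / (k - 1)) ≥ (lam / 2) ^ (1 / (k - 1)) * (f x - f xstar) :=
  gradient_dominates_suboptimality_general S f g lam k hlam hk hUC xstar hxstar hmin
end
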